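/- With A = ℤ[ψ1, θ1, λ1, λ2, θ2], B_open = ℤ[ψ1,θ1,λ1,λ2]/I₄ where I₄ = (λ2−ψ1(λ1−ψ1), (λ1+θ1)(24λ1²−48λ2), 20(λ1+θ1)λ1λ2, θ1(λ1+θ1)), B_cl = ℤ[ξ,λ1,λ2]/(2ξ, ξ(λ1−ξ)), and D = ℤ[ξ,λ1]/(2ξ, ξ(λ1−ξ)): (a) there is a well-defined ring homomorphism φ₁ : B_open → D with ψ1 ↦ ξ, θ1 ↦ ξ−λ1, λ1 ↦ λ1, λ2 ↦ 0; (b) letting φ₂ : B_cl → D be the quotient map killing λ2, the ring homomorphism A → B_open × B_cl given by f ↦ (f(ψ1,θ1,λ1,λ2,0) mod I₄, f(ξ, ξ−λ1, λ1, λ2, λ2) mod (2ξ,ξ(λ1−ξ))) induces a ring isomorphism from A/I₇ onto the fiber product {(u,v) ∈ B_open × B_cl : φ₁(u) = φ₂(v)}, where I₇ = (λ2−θ2−ψ1(λ1−ψ1), (λ1+θ1)(24λ1²−48λ2), 20(λ1+θ1)λ1λ2, θ1(λ1+θ1), 2ψ1θ2, θ2(θ1+λ1−ψ1), ψ1θ1θ2).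 -/
import Mathlib


open MvPolynomial

/-- The ideal `I₄ ⊂ ℤ[ψ1,θ1,λ1,λ2]` generated by `λ2−ψ1(λ1−ψ1)`,
`(λ1+θ1)(24λ1²−48λ2)`, `20(λ1+θ1)λ1λ2`, `θ1(λ1+θ1)`.
Variables: `ψ1 = X 0`, `θ1 = X 1`, `λ1 = X 2`, `λ2 = X 3`. -/
noncomputable def I₄ : Ideal (MvPolynomial (Fin 4) ℤ) :=
  Ideal.span {X 3 - X 0 * (X 2 - X 0),
    (X 2 + X 1) * (24 * X 2 ^ 2 - 48 * X 3),
    20 * (X 2 + X 1) * X 2 * X 3,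
    X 1 * (X 2 + X 1)}

/-- `B_open = ℤ[ψ1,θ1,λ1,λ2]/I₄`. -/
noncomputable abbrev Bopen := MvPolynomial (Fin 4) ℤ ⧸ I₄

/-- The ideal `(2ξ, ξ(λ1−ξ)) ⊂ ℤ[ξ,λ1,λ2]`.  Variables: `ξ = X 0`, `λ1 = X 1`,
`λ2 = X 2`. -/
noncomputable def Icl : Ideal (MvPolynomial (Fin 3) ℤ) :=
  Ideal.span {2 * X 0, X 0 * (X 1 - X 0)}

/-- `B_cl = ℤ[ξ,λ1,λ2]/(2ξ, ξ(λ1−ξ))`. -/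
noncomputable abbrev Bcl := MvPolynomial (Fin 3) ℤ ⧸ Icl

/-- The ideal `(2ξ, ξ(λ1−ξ)) ⊂ ℤ[ξ,λ1]`.  Variables: `ξ = X 0`, `λ1 = X 1`. -/
noncomputable def IDl : Ideal (MvPolynomial (Fin 2) ℤ) :=
  Ideal.span {2 * X 0, X 0 * (X 1 - X 0)}

/-- `Dq = ℤ[ξ,λ1]/(2ξ, ξ(λ1−ξ))`. -/
noncomputable abbrev Dq := MvPolynomial (Fin 2) ℤ ⧸ IDl

/-- `G₁ : A = ℤ[ψ1,θ1,λ1,λ2,θ2] → B_open`, `f ↦ f(ψ1,θ1,λ1,λ2,0) mod I₄`.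
Source variables: `ψ1 = X 0`, `θ1 = X 1`, `λ1 = X 2`, `λ2 = X 3`, `θ2 = X 4`. -/
noncomputable def G₁ : MvPolynomial (Fin 5) ℤ →+* Bopen :=
  (Ideal.Quotient.mk I₄).comp
    ((aeval ![X 0, X 1, X 2, X 3, 0] :
        MvPolynomial (Fin 5) ℤ →ₐ[ℤ] MvPolynomial (Fin 4) ℤ) :
      MvPolynomial (Fin 5) ℤ →+* MvPolynomial (Fin 4) ℤ)

/-- `G₂ : A → B_cl`, `f ↦ f(ξ, ξ−λ1, λ1, λ2, λ2) mod (2ξ, ξ(λ1−ξ))`. -/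
noncomputable def G₂ : MvPolynomial (Fin 5) ℤ →+* Bcl :=
  (Ideal.Quotient.mk Icl).comp
    ((aeval ![X 0, X 0 - X 1, X 1, X 2, X 2] :
        MvPolynomial (Fin 5) ℤ →ₐ[ℤ] MvPolynomial (Fin 3) ℤ) :
      MvPolynomial (Fin 5) ℤ →+* MvPolynomial (Fin 3) ℤ)

/-- The ideal `I₇ ⊂ A = ℤ[ψ1,θ1,λ1,λ2,θ2]` generated by the seven elements
`λ2−θ2−ψ1(λ1−ψ1)`, `(λ1+θ1)(24λ1²−48λ2)`, `20(λ1+θ1)λ1λ2`, `θ1(λ1+θ1)`,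
`2ψ1θ2`, `θ2(θ1+λ1−ψ1)`, `ψ1θ1θ2`. -/
noncomputable def I₇ : Ideal (MvPolynomial (Fin 5) ℤ) :=
  Ideal.span {X 3 - X 4 - X 0 * (X 2 - X 0),
    (X 2 + X 1) * (24 * X 2 ^ 2 - 48 * X 3),
    20 * (X 2 + X 1) * X 2 * X 3,
    X 1 * (X 2 + X 1),
    2 * X 0 * X 4,
    X 4 * (X 1 + X 2 - X 0),
    X 0 * X 1 * X 4}


namespace CFP

/- ### generic helpers -/

lemma diff_mem {n : ℕ} {S : Type*} [CommRing S] [Algebra ℤ S]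
    (u v : MvPolynomial (Fin n) ℤ →ₐ[ℤ] S) (P : Ideal S)
    (h : ∀ i, u (X i) - v (X i) ∈ P) : ∀ f, u f - v f ∈ P := by
  intro f
  induction f using MvPolynomial.induction_on with
  | C a =>
      rw [← MvPolynomial.algebraMap_eq, AlgHom.commutes, AlgHom.commutes, sub_self]
      exact P.zero_mem
  | add p q hp hq =>
      have e : u (p + q) - v (p + q) = (u p - v p) + (u q - v q) := by
        rw [map_add, map_add]; ring
      rw [e]; exact P.add_mem hp hq
  | mul_X p i hp =>
      have e : u (p * X i) - v (p * X i)
          = (u p - v p) * u (X i) + v p * (u (X i) - v (X i)) := by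
        rw [map_mul, map_mul]; ring
      rw [e]; exact P.add_mem (P.mul_mem_right _ hp) (P.mul_mem_left _ (h i))

lemma mem2' {R : Type*} [CommRing R] {a b x : R} (u v : R) (h : x = u * a + v * b) :
    x ∈ Ideal.span {a, b} := by
  subst h
  exact Ideal.add_mem _
    (Ideal.mul_mem_left _ _ (Ideal.subset_span (Set.mem_insert _ _)))
    (Ideal.mul_mem_left _ _ (Ideal.subset_span (Set.mem_insert_of_mem _ rfl)))

lemma mem3' {R : Type*} [CommRing R] {a b c x : R} (u v w : R) (h : x = u * a + v * b + w * c) :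
    x ∈ Ideal.span {a, b, c} := by
  subst h
  refine Ideal.add_mem _ (Ideal.add_mem _ ?_ ?_) ?_
  · exact Ideal.mul_mem_left _ _ (Ideal.subset_span (Set.mem_insert _ _))
  · exact Ideal.mul_mem_left _ _ (Ideal.subset_span (Set.mem_insert_of_mem _ (Set.mem_insert _ _)))
  · exact Ideal.mul_mem_left _ _ (Ideal.subset_span
      (Set.mem_insert_of_mem _ (Set.mem_insert_of_mem _ rfl)))

lemma mem4' {R : Type*} [CommRing R] {a b c d x : R} (u v w s : R)
    (h : x = u * a + v * b + w * c + s * d) :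
    x ∈ Ideal.span {a, b, c, d} := by
  subst h
  refine Ideal.add_mem _ (Ideal.add_mem _ (Ideal.add_mem _ ?_ ?_) ?_) ?_
  · exact Ideal.mul_mem_left _ _ (Ideal.subset_span (Set.mem_insert _ _))
  · exact Ideal.mul_mem_left _ _ (Ideal.subset_span (Set.mem_insert_of_mem _ (Set.mem_insert _ _)))
  · exact Ideal.mul_mem_left _ _ (Ideal.subset_span
      (Set.mem_insert_of_mem _ (Set.mem_insert_of_mem _ (Set.mem_insert _ _))))
  · exact Ideal.mul_mem_left _ _ (Ideal.subset_span
      (Set.mem_insert_of_mem _ (Set.mem_insert_of_mem _ (Set.mem_insert_of_mem _ rfl))))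

lemma mem7' {R : Type*} [CommRing R] {a1 a2 a3 a4 a5 a6 a7 x : R} (c1 c2 c3 c4 c5 c6 c7 : R)
    (h : x = c1 * a1 + c2 * a2 + c3 * a3 + c4 * a4 + c5 * a5 + c6 * a6 + c7 * a7) :
    x ∈ Ideal.span {a1, a2, a3, a4, a5, a6, a7} := by
  subst h
  have m1 : a1 ∈ ({a1, a2, a3, a4, a5, a6, a7} : Set R) := Set.mem_insert _ _
  have m2 : a2 ∈ ({a1, a2, a3, a4, a5, a6, a7} : Set R) :=
    Set.mem_insert_of_mem _ (Set.mem_insert _ _)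
  have m3 : a3 ∈ ({a1, a2, a3, a4, a5, a6, a7} : Set R) :=
    Set.mem_insert_of_mem _ (Set.mem_insert_of_mem _ (Set.mem_insert _ _))
  have m4 : a4 ∈ ({a1, a2, a3, a4, a5, a6, a7} : Set R) :=
    Set.mem_insert_of_mem _ (Set.mem_insert_of_mem _ (Set.mem_insert_of_mem _ (Set.mem_insert _ _)))
  have m5 : a5 ∈ ({a1, a2, a3, a4, a5, a6, a7} : Set R) :=
    Set.mem_insert_of_mem _ (Set.mem_insert_of_mem _ (Set.mem_insert_of_mem _
      (Set.mem_insert_of_mem _ (Set.mem_insert _ _))))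
  have m6 : a6 ∈ ({a1, a2, a3, a4, a5, a6, a7} : Set R) :=
    Set.mem_insert_of_mem _ (Set.mem_insert_of_mem _ (Set.mem_insert_of_mem _
      (Set.mem_insert_of_mem _ (Set.mem_insert_of_mem _ (Set.mem_insert _ _)))))
  have m7 : a7 ∈ ({a1, a2, a3, a4, a5, a6, a7} : Set R) :=
    Set.mem_insert_of_mem _ (Set.mem_insert_of_mem _ (Set.mem_insert_of_mem _
      (Set.mem_insert_of_mem _ (Set.mem_insert_of_mem _ (Set.mem_insert_of_mem _ rfl)))))
  refine Ideal.add_mem _ (Ideal.add_mem _ (Ideal.add_mem _ (Ideal.add_mem _ (Ideal.add_mem _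
    (Ideal.add_mem _ ?_ ?_) ?_) ?_) ?_) ?_) ?_ <;>
    exact Ideal.mul_mem_left _ _ (Ideal.subset_span (by assumption))

lemma mem_span3_dest {R : Type*} [CommRing R] {a b c x : R} (h : x ∈ Ideal.span {a, b, c}) :
    ∃ u v w, x = u * a + v * b + w * c := by
  rw [show ({a, b, c} : Set R) = insert a {b, c} from rfl, Ideal.mem_span_insert] at h
  obtain ⟨u, z, hz, rfl⟩ := h
  obtain ⟨v, w, hvw⟩ := Ideal.mem_span_pair.mp hz
  exact ⟨u, v, w, by rw [← hvw]; ring⟩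

lemma mem_span4_dest {R : Type*} [CommRing R] {a b c d x : R} (h : x ∈ Ideal.span {a, b, c, d}) :
    ∃ u v w s, x = u * a + v * b + w * c + s * d := by
  rw [show ({a, b, c, d} : Set R) = insert a {b, c, d} from rfl, Ideal.mem_span_insert] at h
  obtain ⟨u, z, hz, rfl⟩ := h
  obtain ⟨v, w, s, hs⟩ := mem_span3_dest hz
  exact ⟨u, v, w, s, by rw [hs]; ring⟩

/- ### substitution maps -/

noncomputable def s1 : MvPolynomial (Fin 5) ℤ →ₐ[ℤ] MvPolynomial (Fin 4) ℤ :=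
  aeval ![X 0, X 1, X 2, X 3, 0]
noncomputable def s2 : MvPolynomial (Fin 5) ℤ →ₐ[ℤ] MvPolynomial (Fin 3) ℤ :=
  aeval ![X 0, X 0 - X 1, X 1, X 2, X 2]
noncomputable def sm : MvPolynomial (Fin 4) ℤ →ₐ[ℤ] MvPolynomial (Fin 3) ℤ :=
  aeval ![X 0, X 0 - X 1, X 1, X 2]
noncomputable def am : MvPolynomial (Fin 4) ℤ →ₐ[ℤ] MvPolynomial (Fin 2) ℤ :=
  aeval ![X 0, X 0 - X 1, X 1, 0]
noncomputable def bm : MvPolynomial (Fin 3) ℤ →ₐ[ℤ] MvPolynomial (Fin 2) ℤ :=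
  aeval ![X 0, X 1, 0]
noncomputable def jm : MvPolynomial (Fin 4) ℤ →ₐ[ℤ] MvPolynomial (Fin 5) ℤ :=
  aeval ![X 0, X 1, X 2, X 3]
noncomputable def um : MvPolynomial (Fin 3) ℤ →ₐ[ℤ] MvPolynomial (Fin 4) ℤ :=
  aeval ![X 0, X 0 - X 1, X 3]
noncomputable def im : MvPolynomial (Fin 2) ℤ →ₐ[ℤ] MvPolynomial (Fin 3) ℤ :=
  aeval ![X 0, X 1]
noncomputable def Em : MvPolynomial (Fin 5) ℤ →ₐ[ℤ] MvPolynomial (Fin 4) ℤ :=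
  aeval ![X 0, X 1, X 2, X 3, X 3 - X 0 * (X 2 - X 0)]

@[simp] lemma s1_0 : s1 (X 0) = X 0 := by simp [s1]
@[simp] lemma s1_1 : s1 (X 1) = X 1 := by simp [s1]
@[simp] lemma s1_2 : s1 (X 2) = X 2 := by simp [s1]
@[simp] lemma s1_3 : s1 (X 3) = X 3 := by simp [s1]
@[simp] lemma s1_4 : s1 (X 4) = 0 := by simp [s1]
@[simp] lemma s2_0 : s2 (X 0) = X 0 := by simp [s2]
@[simp] lemma s2_1 : s2 (X 1) = X 0 - X 1 := by simp [s2]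
@[simp] lemma s2_2 : s2 (X 2) = X 1 := by simp [s2]
@[simp] lemma s2_3 : s2 (X 3) = X 2 := by simp [s2]
@[simp] lemma s2_4 : s2 (X 4) = X 2 := by simp [s2]
@[simp] lemma sm0 : sm (X 0) = X 0 := by simp [sm]
@[simp] lemma sm1 : sm (X 1) = X 0 - X 1 := by simp [sm]
@[simp] lemma sm2 : sm (X 2) = X 1 := by simp [sm]
@[simp] lemma sm3 : sm (X 3) = X 2 := by simp [sm]
@[simp] lemma am0 : am (X 0) = X 0 := by simp [am]
@[simp] lemma am1 : am (X 1) = X 0 - X 1 := by simp [am]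
@[simp] lemma am2 : am (X 2) = X 1 := by simp [am]
@[simp] lemma am3 : am (X 3) = 0 := by simp [am]
@[simp] lemma bm0 : bm (X 0) = X 0 := by simp [bm]
@[simp] lemma bm1 : bm (X 1) = X 1 := by simp [bm]
@[simp] lemma bm2 : bm (X 2) = 0 := by simp [bm]
@[simp] lemma jm0 : jm (X 0) = X 0 := by simp [jm]
@[simp] lemma jm1 : jm (X 1) = X 1 := by simp [jm]
@[simp] lemma jm2 : jm (X 2) = X 2 := by simp [jm]
@[simp] lemma jm3 : jm (X 3) = X 3 := by simp [jm]
@[simp] lemma um0 : um (X 0) = X 0 := by simp [um]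
@[simp] lemma um1 : um (X 1) = X 0 - X 1 := by simp [um]
@[simp] lemma um2 : um (X 2) = X 3 := by simp [um]
@[simp] lemma im0 : im (X 0) = X 0 := by simp [im]
@[simp] lemma im1 : im (X 1) = X 1 := by simp [im]

lemma s1_jm : s1.comp jm = AlgHom.id ℤ _ := by
  apply algHom_ext; intro i; fin_cases i <;> simp [s1, jm]
lemma s2_jm : s2.comp jm = sm := by
  apply algHom_ext; intro i; fin_cases i <;> simp [s2, jm, sm]
lemma sm_um : sm.comp um = AlgHom.id ℤ _ := by
  apply algHom_ext; intro i; fin_cases i <;> simp [sm, um]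
lemma bm_sm : bm.comp sm = am := by
  apply algHom_ext; intro i; fin_cases i <;> simp [bm, sm, am]
lemma am_s1 : am.comp s1 = bm.comp s2 := by
  apply algHom_ext; intro i; fin_cases i <;> simp [am, s1, bm, s2]

lemma s1_jm_app (p : MvPolynomial (Fin 4) ℤ) : s1 (jm p) = p := by
  have := DFunLike.congr_fun s1_jm p; simpa using this
lemma s2_jm_app (p : MvPolynomial (Fin 4) ℤ) : s2 (jm p) = sm p := by
  have := DFunLike.congr_fun s2_jm p; simpa using this
lemma sm_um_app (p : MvPolynomial (Fin 3) ℤ) : sm (um p) = p := by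
  have := DFunLike.congr_fun sm_um p; simpa using this
lemma bm_sm_app (p : MvPolynomial (Fin 4) ℤ) : bm (sm p) = am p := by
  have := DFunLike.congr_fun bm_sm p; simpa using this
lemma am_s1_app (f : MvPolynomial (Fin 5) ℤ) : am (s1 f) = bm (s2 f) := by
  have := DFunLike.congr_fun am_s1 f; simpa using this

lemma I4_def : I₄ = Ideal.span {X 3 - X 0 * (X 2 - X 0),
    (X 2 + X 1) * (24 * X 2 ^ 2 - 48 * X 3),
    20 * (X 2 + X 1) * X 2 * X 3,
    X 1 * (X 2 + X 1)} := rfl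
lemma Icl_def : Icl = Ideal.span {2 * X 0, X 0 * (X 1 - X 0)} := rfl
lemma IDl_def : IDl = Ideal.span {2 * X 0, X 0 * (X 1 - X 0)} := rfl
lemma I7_def : I₇ = Ideal.span {X 3 - X 4 - X 0 * (X 2 - X 0),
    (X 2 + X 1) * (24 * X 2 ^ 2 - 48 * X 3),
    20 * (X 2 + X 1) * X 2 * X 3,
    X 1 * (X 2 + X 1),
    2 * X 0 * X 4,
    X 4 * (X 1 + X 2 - X 0),
    X 0 * X 1 * X 4} := rfl

/- ### regularity of X 2 modulo Icl -/

noncomputable def ee : MvPolynomial (Fin 3) ℤ ≃ₐ[ℤ] Polynomial (MvPolynomial (Fin 2) ℤ) :=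
  (renameEquiv ℤ (finRotate 3)).trans (finSuccEquiv ℤ 2)

lemma e0 : ee (X 0) = Polynomial.C (X 0) := by
  have h : (finRotate 3) (0 : Fin 3) = Fin.succ 0 := by decide
  simp only [ee, AlgEquiv.trans_apply, renameEquiv_apply, rename_X, h]
  rw [show (X (Fin.succ (0 : Fin 2)) : MvPolynomial (Fin 3) ℤ) = X (Fin.succ 0) from rfl,
    finSuccEquiv_X_succ]
lemma e1 : ee (X 1) = Polynomial.C (X 1) := by
  have h : (finRotate 3) (1 : Fin 3) = Fin.succ 1 := by decide
  simp only [ee, AlgEquiv.trans_apply, renameEquiv_apply, rename_X, h, finSuccEquiv_X_succ]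
lemma e2 : ee (X 2) = Polynomial.X := by
  have h : (finRotate 3) (2 : Fin 3) = 0 := by decide
  simp only [ee, AlgEquiv.trans_apply, renameEquiv_apply, rename_X, h, finSuccEquiv_X_zero]

lemma ea : ee (2 * X 0) = Polynomial.C (2 * X 0) := by
  rw [map_mul, map_ofNat, e0, map_mul, map_ofNat]
lemma eb : ee (X 0 * (X 1 - X 0)) = Polynomial.C (X 0 * (X 1 - X 0)) := by
  rw [map_mul, map_sub, e0, e1, map_mul, map_sub]

lemma map_ee : Ideal.map ee Icl = Ideal.map (Polynomial.C) IDl := by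
  apply le_antisymm
  · rw [Ideal.map_le_iff_le_comap, Icl_def, Ideal.span_le]
    rintro x (rfl | rfl)
    · exact Ideal.mem_comap.mpr (ea ▸ Ideal.mem_map_of_mem _
        (Ideal.subset_span (Set.mem_insert _ _)))
    · exact Ideal.mem_comap.mpr (eb ▸ Ideal.mem_map_of_mem _
        (Ideal.subset_span (Set.mem_insert_of_mem _ rfl)))
  · rw [Ideal.map_le_iff_le_comap, IDl_def, Ideal.span_le]
    rintro x (rfl | rfl)
    · exact Ideal.mem_comap.mpr (ea ▸ Ideal.mem_map_of_mem (f := ee)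
        (Ideal.subset_span (Set.mem_insert _ _)))
    · exact Ideal.mem_comap.mpr (eb ▸ Ideal.mem_map_of_mem (f := ee)
        (Ideal.subset_span (Set.mem_insert_of_mem _ rfl)))

lemma mem_ee {p : MvPolynomial (Fin 3) ℤ} : p ∈ Icl ↔ ee p ∈ Ideal.map Polynomial.C IDl := by
  rw [← map_ee]
  constructor
  · exact fun h => Ideal.mem_map_of_mem _ h
  · intro h
    obtain ⟨x, hx, hxe⟩ := (Ideal.mem_map_iff_of_surjective _ ee.surjective).mp h
    rwa [← ee.injective hxe]

lemma reg {p : MvPolynomial (Fin 3) ℤ} (h : X 2 * p ∈ Icl) : p ∈ Icl := by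
  rw [mem_ee] at h ⊢
  rw [map_mul, e2, Ideal.mem_map_C_iff] at h
  rw [Ideal.mem_map_C_iff]
  intro n
  have := h (n + 1)
  rwa [Polynomial.coeff_X_mul] at this

/- ### the comparison maps φ₁ and φ₂ -/

lemma am_I4 : ∀ a ∈ I₄, ((Ideal.Quotient.mk IDl).comp
    (am : MvPolynomial (Fin 4) ℤ →+* MvPolynomial (Fin 2) ℤ)) a = 0 := by
  have h : I₄ ≤ Ideal.comap (am : MvPolynomial (Fin 4) ℤ →ₐ[ℤ] MvPolynomial (Fin 2) ℤ) IDl := by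
    rw [I4_def, Ideal.span_le]
    rintro x (rfl | rfl | rfl | rfl) <;> refine Ideal.mem_comap.mpr ?_ <;> rw [IDl_def]
    · exact mem2' 0 (-1) (by simp only [map_sub, map_mul, am0, am2, am3]; ring)
    · exact mem2' (12 * X 1 ^ 2) 0 (by
        simp only [map_sub, map_mul, map_add, map_pow, map_ofNat, am0, am1, am2, am3]; ring)
    · exact mem2' 0 0 (by
        simp only [map_sub, map_mul, map_add, map_ofNat, am0, am1, am2, am3]; ring)
    · exact mem2' 0 (-1) (by simp only [map_mul, map_add, am0, am1, am2]; ring)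
  intro a ha
  exact Ideal.Quotient.eq_zero_iff_mem.mpr (h ha)

lemma bm_Icl : ∀ a ∈ Icl, ((Ideal.Quotient.mk IDl).comp
    (bm : MvPolynomial (Fin 3) ℤ →+* MvPolynomial (Fin 2) ℤ)) a = 0 := by
  have h : Icl ≤ Ideal.comap (bm : MvPolynomial (Fin 3) ℤ →ₐ[ℤ] MvPolynomial (Fin 2) ℤ) IDl := by
    rw [Icl_def, Ideal.span_le]
    rintro x (rfl | rfl) <;> refine Ideal.mem_comap.mpr ?_ <;> rw [IDl_def]
    · exact mem2' 1 0 (by simp only [map_mul, map_ofNat, bm0]; ring)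
    · exact mem2' 0 1 (by simp only [map_mul, map_sub, bm0, bm1]; ring)
  intro a ha
  exact Ideal.Quotient.eq_zero_iff_mem.mpr (h ha)

noncomputable def phi1 : Bopen →+* Dq :=
  Ideal.Quotient.lift I₄ ((Ideal.Quotient.mk IDl).comp
    (am : MvPolynomial (Fin 4) ℤ →+* MvPolynomial (Fin 2) ℤ)) am_I4

noncomputable def phi2 : Bcl →+* Dq :=
  Ideal.Quotient.lift Icl ((Ideal.Quotient.mk IDl).comp
    (bm : MvPolynomial (Fin 3) ℤ →+* MvPolynomial (Fin 2) ℤ)) bm_Icl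

lemma phi1_mk (p : MvPolynomial (Fin 4) ℤ) :
    phi1 (Ideal.Quotient.mk I₄ p) = Ideal.Quotient.mk IDl (am p) :=
  Ideal.Quotient.lift_mk _ _ _

lemma phi2_mk (p : MvPolynomial (Fin 3) ℤ) :
    phi2 (Ideal.Quotient.mk Icl p) = Ideal.Quotient.mk IDl (bm p) :=
  Ideal.Quotient.lift_mk _ _ _

lemma G1_apply (f : MvPolynomial (Fin 5) ℤ) : G₁ f = Ideal.Quotient.mk I₄ (s1 f) := rfl
lemma G2_apply (f : MvPolynomial (Fin 5) ℤ) : G₂ f = Ideal.Quotient.mk Icl (s2 f) := rfl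

/- ### the kernel -/

lemma β_pre {w : MvPolynomial (Fin 3) ℤ} (h : bm w ∈ IDl) :
    w ∈ Ideal.span {2 * X 0, X 0 * (X 1 - X 0), X 2} := by
  rw [IDl_def] at h
  obtain ⟨u, v, huv⟩ := Ideal.mem_span_pair.mp h
  have h1 : im (bm w) ∈ Ideal.span {2 * X 0, X 0 * (X 1 - X 0), (X 2 : MvPolynomial (Fin 3) ℤ)} := by
    rw [← huv]
    exact mem3' (im u) (im v) 0 (by
      simp only [map_add, map_mul, map_sub, map_ofNat, im0, im1]; ring)
  have h2 : w - im (bm w) ∈ Ideal.span {2 * X 0, X 0 * (X 1 - X 0), (X 2 : MvPolynomial (Fin 3) ℤ)} := by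
    refine diff_mem (AlgHom.id ℤ _) (im.comp bm) _ ?_ w
    intro i; fin_cases i
    · refine mem3' 0 0 0 ?_
      simp [bm, im]
    · refine mem3' 0 0 0 ?_
      simp [bm, im]
    · refine mem3' 0 0 1 ?_
      simp [bm, im]
  have := Ideal.add_mem _ h2 h1
  simpa using this

lemma σ_pre {p : MvPolynomial (Fin 4) ℤ} (h : sm p ∈ Icl) :
    p ∈ Ideal.span {2 * X 0, X 0 * X 1, X 1 + X 2 - X 0} := by
  rw [Icl_def] at h
  obtain ⟨u, v, huv⟩ := Ideal.mem_span_pair.mp h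
  have h1 : um (sm p) ∈ Ideal.span {2 * X 0, X 0 * X 1, (X 1 + X 2 - X 0 : MvPolynomial (Fin 4) ℤ)} := by
    rw [← huv]
    exact mem3' (um u) (-um v) 0 (by
      simp only [map_add, map_mul, map_sub, map_ofNat, um0, um1]; ring)
  have h2 : p - um (sm p) ∈
      Ideal.span {2 * X 0, X 0 * X 1, (X 1 + X 2 - X 0 : MvPolynomial (Fin 4) ℤ)} := by
    refine diff_mem (AlgHom.id ℤ _) (um.comp sm) _ ?_ p
    intro i; fin_cases i
    · refine mem3' 0 0 0 ?_
      simp [sm, um]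
    · refine mem3' 0 0 0 ?_
      simp [sm, um]
    · refine mem3' 0 0 1 ?_
      simp [sm, um]; try ring
    · refine mem3' 0 0 0 ?_
      simp [sm, um]
  have := Ideal.add_mem _ h2 h1
  simpa using this

lemma sm_g2_mem : sm ((X 2 + X 1) * (24 * X 2 ^ 2 - 48 * X 3)) ∈ Icl := by
  rw [Icl_def]
  exact mem2' (12 * X 1 ^ 2 - 24 * X 2) 0 (by
    simp only [map_sub, map_mul, map_add, map_pow, map_ofNat, sm0, sm1, sm2, sm3]; ring)
lemma sm_g3_mem : sm (20 * (X 2 + X 1) * X 2 * X 3) ∈ Icl := by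
  rw [Icl_def]
  exact mem2' (10 * X 1 * X 2) 0 (by
    simp only [map_sub, map_mul, map_add, map_ofNat, sm0, sm1, sm2, sm3]; ring)
lemma sm_g4_mem : sm (X 1 * (X 2 + X 1)) ∈ Icl := by
  rw [Icl_def]
  exact mem2' 0 (-1) (by
    simp only [map_mul, map_add, sm0, sm1, sm2]; ring)

lemma ker_le : RingHom.ker (G₁.prod G₂) ≤ I₇ := by
  intro f hf
  rw [RingHom.mem_ker, RingHom.prod_apply, Prod.mk_eq_zero] at hf
  obtain ⟨h1, h2⟩ := hf
  rw [G1_apply, Ideal.Quotient.eq_zero_iff_mem] at h1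
  rw [G2_apply, Ideal.Quotient.eq_zero_iff_mem] at h2
  -- replace f by its θ₂-eliminated form jm (Em f)
  have hfE : f - jm (Em f) ∈ I₇ := by
    refine diff_mem (AlgHom.id ℤ _) (jm.comp Em) _ ?_ f
    intro i
    rw [I7_def]
    fin_cases i
    · refine mem7' 0 0 0 0 0 0 0 ?_
      simp [Em, jm]; try ring
    · refine mem7' 0 0 0 0 0 0 0 ?_
      simp [Em, jm]; try ring
    · refine mem7' 0 0 0 0 0 0 0 ?_
      simp [Em, jm]; try ring
    · refine mem7' 0 0 0 0 0 0 0 ?_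
      simp [Em, jm]; try ring
    · refine mem7' (-1) 0 0 0 0 0 0 ?_
      simp [Em, jm]; try ring
  have hEf4 : Em f ∈ I₄ := by
    have hd : Em f - s1 f ∈ I₄ := by
      refine diff_mem Em s1 _ ?_ f
      intro i
      rw [I4_def]
      fin_cases i
      · refine mem4' 0 0 0 0 ?_
        simp [Em, s1]; try ring
      · refine mem4' 0 0 0 0 ?_
        simp [Em, s1]; try ring
      · refine mem4' 0 0 0 0 ?_
        simp [Em, s1]; try ring
      · refine mem4' 0 0 0 0 ?_
        simp [Em, s1]; try ring
      · refine mem4' 1 0 0 0 ?_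
        simp [Em, s1]; try ring
    have := I₄.add_mem hd h1
    simpa using this
  have hEf3 : sm (Em f) ∈ Icl := by
    have hd : (sm.comp Em) f - s2 f ∈ Icl := by
      refine diff_mem (sm.comp Em) s2 _ ?_ f
      intro i
      rw [Icl_def]
      fin_cases i
      · refine mem2' 0 0 ?_
        simp [Em, sm, s2]; try ring
      · refine mem2' 0 0 ?_
        simp [Em, sm, s2]; try ring
      · refine mem2' 0 0 ?_
        simp [Em, sm, s2]; try ring
      · refine mem2' 0 0 ?_
        simp [Em, sm, s2]; try ring
      · refine mem2' 0 (-1) ?_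
        simp [Em, sm, s2]; try ring
    have h' : (sm.comp Em) f = sm (Em f) := rfl
    rw [h'] at hd
    have := Icl.add_mem hd h2
    simpa using this
  -- decompose Em f in I₄
  rw [I4_def] at hEf4
  obtain ⟨p, q, r, s, hg⟩ := mem_span4_dest hEf4
  -- X 2 * sm p ∈ Icl
  have hX2 : X 2 * sm p ∈ Icl := by
    have key : X 2 * sm p = sm (Em f)
        - sm q * sm ((X 2 + X 1) * (24 * X 2 ^ 2 - 48 * X 3))
        - sm r * sm (20 * (X 2 + X 1) * X 2 * X 3)
        - sm s * sm (X 1 * (X 2 + X 1))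
        + sm p * (X 0 * (X 1 - X 0)) := by
      rw [hg]
      simp only [map_add, map_mul, map_sub, map_pow, map_ofNat, sm0, sm1, sm2, sm3]
      ring
    rw [key]
    refine Icl.add_mem (Icl.sub_mem (Icl.sub_mem (Icl.sub_mem hEf3
      (Icl.mul_mem_left _ sm_g2_mem)) (Icl.mul_mem_left _ sm_g3_mem))
      (Icl.mul_mem_left _ sm_g4_mem)) ?_
    rw [Icl_def]
    exact mem2' 0 (sm p) (by ring)
  have hpL : p ∈ Ideal.span {2 * X 0, X 0 * X 1, (X 1 + X 2 - X 0 : MvPolynomial (Fin 4) ℤ)} :=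
    σ_pre (reg hX2)
  obtain ⟨u', v', w', hp'⟩ := mem_span3_dest hpL
  -- assemble jm (Em f) ∈ I₇
  have hjg : jm (Em f) ∈ I₇ := by
    rw [I7_def]
    refine mem7' (jm p) (jm q) (jm r) (jm s) (jm u') (jm w') (jm v') ?_
    have E1 : jm (Em f) = jm p * (X 3 - X 4 - X 0 * (X 2 - X 0))
        + jm q * ((X 2 + X 1) * (24 * X 2 ^ 2 - 48 * X 3))
        + jm r * (20 * (X 2 + X 1) * X 2 * X 3)
        + jm s * (X 1 * (X 2 + X 1))
        + jm p * X 4 := by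
      rw [hg]
      simp only [map_add, map_mul, map_sub, map_pow, map_ofNat, jm0, jm1, jm2, jm3]
      ring
    have E2 : jm p * X 4 = jm u' * (2 * X 0 * X 4)
        + jm w' * (X 4 * (X 1 + X 2 - X 0)) + jm v' * (X 0 * X 1 * X 4) := by
      rw [hp']
      simp only [map_add, map_mul, map_sub, map_ofNat, jm0, jm1, jm2]
      ring
    rw [E1, E2]; ring
  have := I₇.add_mem hfE hjg
  simpa using this

lemma I7_le_ker : I₇ ≤ RingHom.ker (G₁.prod G₂) := by
  rw [I7_def, Ideal.span_le]
  have mem0 : ∀ x : MvPolynomial (Fin 5) ℤ, s1 x ∈ I₄ → s2 x ∈ Icl →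
      x ∈ (RingHom.ker (G₁.prod G₂) : Set (MvPolynomial (Fin 5) ℤ)) := by
    intro x hx1 hx2
    rw [SetLike.mem_coe, RingHom.mem_ker, RingHom.prod_apply, Prod.mk_eq_zero,
      G1_apply, G2_apply, Ideal.Quotient.eq_zero_iff_mem, Ideal.Quotient.eq_zero_iff_mem]
    exact ⟨hx1, hx2⟩
  rintro x (rfl | rfl | rfl | rfl | rfl | rfl | rfl) <;> refine mem0 _ ?_ ?_
  · rw [I4_def]
    refine mem4' 1 0 0 0 ?_
    simp only [map_sub, map_mul, s1_0, s1_2, s1_3, s1_4]; ring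
  · rw [Icl_def]
    refine mem2' 0 (-1) ?_
    simp only [map_sub, map_mul, s2_0, s2_2, s2_3, s2_4]; ring
  · rw [I4_def]
    refine mem4' 0 1 0 0 ?_
    simp only [map_sub, map_mul, map_add, map_pow, map_ofNat, s1_1, s1_2, s1_3]; ring
  · rw [Icl_def]
    refine mem2' (12 * X 1 ^ 2 - 24 * X 2) 0 ?_
    simp only [map_sub, map_mul, map_add, map_pow, map_ofNat, s2_1, s2_2, s2_3]; ring
  · rw [I4_def]
    refine mem4' 0 0 1 0 ?_
    simp only [map_mul, map_add, map_ofNat, s1_1, s1_2, s1_3]; ring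
  · rw [Icl_def]
    refine mem2' (10 * X 1 * X 2) 0 ?_
    simp only [map_mul, map_add, map_ofNat, s2_1, s2_2, s2_3]; ring
  · rw [I4_def]
    refine mem4' 0 0 0 1 ?_
    simp only [map_mul, map_add, s1_1, s1_2]; ring
  · rw [Icl_def]
    refine mem2' 0 (-1) ?_
    simp only [map_mul, map_add, s2_1, s2_2]; ring
  · rw [I4_def]
    refine mem4' 0 0 0 0 ?_
    simp only [map_mul, map_ofNat, s1_0, s1_4]; ring
  · rw [Icl_def]
    refine mem2' (X 2) 0 ?_
    simp only [map_mul, map_ofNat, s2_0, s2_4]; ring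
  · rw [I4_def]
    refine mem4' 0 0 0 0 ?_
    simp only [map_mul, map_add, map_sub, s1_0, s1_1, s1_2, s1_4]; ring
  · rw [Icl_def]
    refine mem2' 0 0 ?_
    simp only [map_mul, map_add, map_sub, s2_0, s2_1, s2_2, s2_4]; ring
  · rw [I4_def]
    refine mem4' 0 0 0 0 ?_
    simp only [map_mul, s1_0, s1_1, s1_4]; ring
  · rw [Icl_def]
    refine mem2' 0 (-(X 2)) ?_
    simp only [map_mul, s2_0, s2_1, s2_4]; ring

end CFP

/-- (a) There is a well-defined ring homomorphism `φ₁ : B_open → Dq` with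
`ψ1 ↦ ξ`, `θ1 ↦ ξ−λ1`, `λ1 ↦ λ1`, `λ2 ↦ 0`; (b) letting `φ₂ : B_cl → Dq` be the
quotient map killing `λ2`, the ring homomorphism `A → B_open × B_cl`,
`f ↦ (f(ψ1,θ1,λ1,λ2,0) mod I₄, f(ξ,ξ−λ1,λ1,λ2,λ2) mod (2ξ,ξ(λ1−ξ)))`, induces a
ring isomorphism from `A/I₇` onto the fiber product
`{(u,v) ∈ B_open × B_cl : φ₁(u) = φ₂(v)}`: i.e. its kernel is `I₇` and its range is
the equalizer subring of `φ₁ ∘ fst` and `φ₂ ∘ snd`. -/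
theorem chow_ring_fiber_product :
    ∃ φ₁ : Bopen →+* Dq, ∃ φ₂ : Bcl →+* Dq,
      (φ₁ (Ideal.Quotient.mk I₄ (X 0)) = Ideal.Quotient.mk IDl (X 0) ∧
       φ₁ (Ideal.Quotient.mk I₄ (X 1)) =
         Ideal.Quotient.mk IDl (X 0) - Ideal.Quotient.mk IDl (X 1) ∧
       φ₁ (Ideal.Quotient.mk I₄ (X 2)) = Ideal.Quotient.mk IDl (X 1) ∧
       φ₁ (Ideal.Quotient.mk I₄ (X 3)) = 0) ∧
      (φ₂ (Ideal.Quotient.mk Icl (X 0)) = Ideal.Quotient.mk IDl (X 0) ∧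
       φ₂ (Ideal.Quotient.mk Icl (X 1)) = Ideal.Quotient.mk IDl (X 1) ∧
       φ₂ (Ideal.Quotient.mk Icl (X 2)) = 0) ∧
      RingHom.ker (G₁.prod G₂) = I₇ ∧
      (G₁.prod G₂).range =
        RingHom.eqLocus (φ₁.comp (RingHom.fst Bopen Bcl)) (φ₂.comp (RingHom.snd Bopen Bcl)) := by
  classical
  refine ⟨CFP.phi1, CFP.phi2, ⟨?_, ?_, ?_, ?_⟩, ⟨?_, ?_, ?_⟩, ?_, ?_⟩
  · rw [CFP.phi1_mk, CFP.am0]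
  · rw [CFP.phi1_mk, CFP.am1, map_sub]
  · rw [CFP.phi1_mk, CFP.am2]
  · rw [CFP.phi1_mk, CFP.am3, map_zero]
  · rw [CFP.phi2_mk, CFP.bm0]
  · rw [CFP.phi2_mk, CFP.bm1]
  · rw [CFP.phi2_mk, CFP.bm2, map_zero]
  · exact le_antisymm CFP.ker_le CFP.I7_le_ker
  · apply le_antisymm
    · rintro x ⟨f, rfl⟩
      show CFP.phi1 (G₁ f) = CFP.phi2 (G₂ f)
      rw [CFP.G1_apply, CFP.G2_apply, CFP.phi1_mk, CFP.phi2_mk, CFP.am_s1_app]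
    · intro x hx
      have hx' : CFP.phi1 x.1 = CFP.phi2 x.2 := hx
      obtain ⟨p, hp⟩ := Ideal.Quotient.mk_surjective x.1
      obtain ⟨q, hq⟩ := Ideal.Quotient.mk_surjective x.2
      rw [← hp, ← hq, CFP.phi1_mk, CFP.phi2_mk] at hx'
      have hab : CFP.bm (CFP.sm p - q) ∈ IDl := by
        rw [map_sub, CFP.bm_sm_app]
        exact Ideal.Quotient.eq.mp hx'
      obtain ⟨u, v, w, huvw⟩ := CFP.mem_span3_dest (CFP.β_pre hab)
      refine ⟨CFP.jm p - X 4 * CFP.jm (CFP.um w), ?_⟩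
      have hF1 : CFP.s1 (CFP.jm p - X 4 * CFP.jm (CFP.um w)) = p := by
        rw [map_sub, map_mul, CFP.s1_jm_app, CFP.s1_4]; ring
      have hF2 : CFP.s2 (CFP.jm p - X 4 * CFP.jm (CFP.um w)) = CFP.sm p - X 2 * w := by
        rw [map_sub, map_mul, CFP.s2_jm_app, CFP.s2_4, CFP.s2_jm_app, CFP.sm_um_app]
      rw [RingHom.prod_apply]
      have hG1 : G₁ (CFP.jm p - X 4 * CFP.jm (CFP.um w)) = x.1 := by
        rw [CFP.G1_apply, hF1, hp]
      have hG2 : G₂ (CFP.jm p - X 4 * CFP.jm (CFP.um w)) = x.2 := by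
        rw [CFP.G2_apply, hF2, ← hq]
        refine Ideal.Quotient.eq.mpr ?_
        rw [CFP.Icl_def]
        refine CFP.mem2' u v ?_
        linear_combination huvw
      rw [hG1, hG2]
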